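/- arXiv:2101.10910 — 3 statements merged into one kernel-verified Lean document; each statement's English description precedes it below -/
import Mathlib

section
/- As formal power series (or for |q|<1): Σ_{m∈ℤ} (−1)^m q^{(5m²+5m)/2} / (1−q^{5m+2}) = (q^5;q^5)_∞² · H(q), where H(q) = 1/((q^2;q^5)_∞ (q^3;q^5)_∞). -/
/-- Infinite q-Pochhammer symbol `(a;b)_∞ = ∏_{m≥0} (1 - a b^m)`. -/
noncomputable def qPochInf (a b : ℂ) : ℂ := ∏' m : ℕ, (1 - a * b ^ m)

/-- Rogers–Ramanujan product `H(q) = 1/((q^2;q^5)_∞ (q^3;q^5)_∞)`. -/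
noncomputable def RRH (q : ℂ) : ℂ := 1 / (qPochInf (q ^ 2) (q ^ 5) * qPochInf (q ^ 3) (q ^ 5))

/-!
Put `p = q⁵` and `z = q²`, so that `p / z = q³`, and write `(a;p)_n` for `qPoch a p n`.
Lagrange interpolation of `X ^ N` at the nodes `p ^ (-n)`, `|n| ≤ N`, is the partial fraction
expansion
`1 / ((z;p)_{N+1} (p/z;p)_N) = ∑_{|n| ≤ N} (-1)ⁿ p^(n(n+1)/2) / ((1 - z pⁿ) (p;p)_{N+n} (p;p)_{N-n})`.
As `N → ∞` the weights `1 / ((p;p)_{N+n} (p;p)_{N-n})` tend to `1 / (p;p)∞²` and stay bounded, so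
Tannery's theorem gives `∑ₙ (-1)ⁿ p^(n(n+1)/2) / (1 - z pⁿ) = (p;p)∞² / ((z;p)∞ (p/z;p)∞)`.
-/

open Finset Filter Topology

section qPochhammer

variable {R : Type*} [CommRing R]

def qPoch (a p : R) (n : ℕ) : R := ∏ k ∈ range n, (1 - a * p ^ k)

lemma qPoch_succ (a p : R) (n : ℕ) : qPoch a p (n + 1) = qPoch a p n * (1 - a * p ^ n) :=
  prod_range_succ _ _

end qPochhammer

lemma two_mul_sq_add_ediv_two (n : ℤ) : 2 * ((n ^ 2 + n) / 2) = n ^ 2 + n :=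
  Int.mul_ediv_cancel' <| (Int.even_mul_succ_self n).two_dvd.trans (by rw [sq, mul_add_one])

lemma pow_injective_of_not_isOfFinOrder {M₀ : Type*} [MonoidWithZero M₀] [IsLeftCancelMulZero M₀]
    {p : M₀} (hp0 : p ≠ 0) (hp : ¬IsOfFinOrder p) : Function.Injective (p ^ · : ℕ → M₀) := by
  intro a b h
  wlog hab : a ≤ b generalizing a b
  · exact (this h.symm (le_of_not_ge hab)).symm
  obtain ⟨c, rfl⟩ := exists_add_of_le hab
  have hc : p ^ c = 1 := mul_left_cancel₀ (pow_ne_zero a hp0) (by simpa [pow_add] using h.symm)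
  have : c = 0 := by
    by_contra hc0
    exact hp (isOfFinOrder_iff_pow_eq_one.mpr ⟨c, Nat.pos_of_ne_zero hc0, hc⟩)
  rw [this, add_zero]

lemma prod_range_erase {M : Type*} [CommMonoid M] (f : ℕ → M) {K i : ℕ} (hi : i < K) :
    ∏ j ∈ (range K).erase i, f j =
      (∏ j ∈ range i, f j) * ∏ l ∈ range (K - 1 - i), f (i + 1 + l) := by
  have hsplit : (range K).erase i = range i ∪ Ico (i + 1) K := by
    ext j
    simp only [mem_erase, mem_range, mem_union, mem_Ico]
    omega
  rw [hsplit, prod_union (disjoint_left.mpr fun j hj hj' => by simp at hj hj'; omega),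
    prod_Ico_eq_prod_range, show K - (i + 1) = K - 1 - i by omega]

section Field

variable {F : Type*} [Field F]

lemma prod_one_sub_mul_zpow_neg {p : F} (hp : p ≠ 0) {b : F} (hb : b ≠ 0) (K : ℕ) :
    ∏ k ∈ range K, (1 - b * p ^ (-((k : ℤ) + 1))) =
      (-b) ^ K * p ^ (-(((K : ℤ) ^ 2 + K) / 2)) * qPoch (p / b) p K := by
  induction K with
  | zero => simp [qPoch]
  | succ K ih =>
    have hT : (((K + 1 : ℕ) : ℤ) ^ 2 + (K + 1 : ℕ)) / 2 = ((K : ℤ) ^ 2 + K) / 2 + (K + 1) := by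
      have := two_mul_sq_add_ediv_two K
      have := two_mul_sq_add_ediv_two (K + 1)
      push_cast
      linarith
    have hpK : p ^ ((K : ℤ) + 1) = p ^ K * p := by
      rw [← pow_succ, ← zpow_natCast]
      push_cast
      rfl
    rw [prod_range_succ, ih, qPoch_succ, hT, neg_add (((K : ℤ) ^ 2 + K) / 2), zpow_add₀ hp,
      zpow_neg p ((K : ℤ) + 1), hpK]
    field_simp
    ring

open Polynomial in
lemma pow_eq_prod_sub_mul_sum_nodalWeight {ι : Type*} [DecidableEq ι] {s : Finset ι} {v : ι → F}
    (hvs : Set.InjOn v s) {x : F} (hx : ∀ i ∈ s, x ≠ v i) {k : ℕ} (hk : k < #s) :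
    x ^ k = (∏ i ∈ s, (x - v i)) * ∑ i ∈ s, Lagrange.nodalWeight s v i * (x - v i)⁻¹ * v i ^ k := by
  have hdeg : (X ^ k : F[X]).degree < #s := by
    rw [degree_X_pow]
    exact_mod_cast hk
  have := congrArg (eval x) (Lagrange.eq_interpolate hvs hdeg)
  rw [Lagrange.eval_interpolate_not_at_node _ hx, Lagrange.eval_nodal] at this
  simpa using this

theorem pow_div_prod_one_sub_mul_eq_sum {ι : Type*} [DecidableEq ι] {s : Finset ι} {a : ι → F}
    (ha : ∀ i ∈ s, a i ≠ 0) (hinj : Set.InjOn a s) {w : F} (hw : ∀ i ∈ s, a i * w ≠ 1)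
    {k : ℕ} (hk : k < #s) :
    w ^ k / ∏ i ∈ s, (1 - a i * w) =
      ∑ i ∈ s, 1 / (a i ^ k * (∏ j ∈ s.erase i, (1 - a j / a i)) * (1 - a i * w)) := by
  have hlag := pow_eq_prod_sub_mul_sum_nodalWeight (v := fun i => (a i)⁻¹) (x := w)
    (fun i hi j hj h => hinj hi hj (inv_injective h))
    (fun i hi h => hw i hi (by rw [h, mul_inv_cancel₀ (ha i hi)])) hk
  have hfactor : ∀ i ∈ s, w - (a i)⁻¹ = -(a i)⁻¹ * (1 - a i * w) := fun i hi => by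
    field_simp [ha i hi]
    ring
  rw [hlag, prod_congr rfl hfactor, prod_mul_distrib, mul_right_comm,
    mul_div_cancel_right₀ _ (prod_ne_zero_iff.mpr fun i hi => sub_ne_zero.mpr (hw i hi).symm),
    mul_sum]
  refine sum_congr rfl fun i hi => ?_
  have hweight : (∏ j ∈ s.erase i, -(a j)⁻¹) * Lagrange.nodalWeight s (fun i => (a i)⁻¹) i =
      (∏ j ∈ s.erase i, (1 - a j / a i))⁻¹ := by
    rw [Lagrange.nodalWeight, ← prod_mul_distrib, ← prod_inv_distrib]
    refine prod_congr rfl fun j hj => ?_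
    obtain ⟨hji, hj⟩ := mem_erase.mp hj
    have hne : a j ≠ a i := fun h => hji (hinj hj hi h)
    have := ha i hi
    have := ha j hj
    field_simp
    ring
  have := ha i hi
  have := sub_ne_zero.mpr (hw i hi).symm
  rw [← mul_prod_erase s _ hi, hfactor i hi]
  calc _ = ((∏ j ∈ s.erase i, -(a j)⁻¹) * Lagrange.nodalWeight s (fun i => (a i)⁻¹) i) *
        (-(a i)⁻¹ * (-(a i)⁻¹ * (1 - a i * w))⁻¹ * (a i)⁻¹ ^ k) := by ring
    _ = _ := by
      rw [hweight]
      generalize ∏ j ∈ s.erase i, (1 - a j / a i) = P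
      field_simp
      rw [div_pow, one_pow, one_div_mul_cancel (pow_ne_zero k (ha i hi))]

lemma prod_erase_range_one_sub_pow_div_pow {p : F} (hp : p ≠ 0) {K i : ℕ} (hi : i < K) :
    ∏ j ∈ (range K).erase i, (1 - p ^ j / p ^ i) =
      (-1) ^ i * p ^ (-(((i : ℤ) ^ 2 + i) / 2)) * (qPoch p p i * qPoch p p (K - 1 - i)) := by
  rw [prod_range_erase _ hi, ← mul_assoc]
  congr 1
  · have h := prod_one_sub_mul_zpow_neg hp one_ne_zero i
    rw [div_one] at h
    rw [← prod_range_reflect, ← h]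
    refine prod_congr rfl fun l hl => ?_
    have hl : l < i := mem_range.mp hl
    rw [one_mul, ← zpow_natCast, ← zpow_natCast, ← zpow_sub₀ hp]
    congr 3
    rw [Nat.sub_sub, Nat.cast_sub (by omega : 1 + l ≤ i)]
    push_cast
    ring
  · refine prod_congr rfl fun l _ => ?_
    have := pow_ne_zero i hp
    rw [pow_add, pow_add, pow_one]
    field_simp

theorem pow_div_qPoch_eq_sum {p : F} (hp0 : p ≠ 0) (hp : ¬IsOfFinOrder p) {w : F} {K k : ℕ}
    (hw : ∀ i < K, w * p ^ i ≠ 1) (hk : k < K) :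
    w ^ k / qPoch w p K = ∑ i ∈ range K, (-1) ^ i * p ^ (((i : ℤ) ^ 2 + i) / 2 - i * k) /
      (qPoch p p i * qPoch p p (K - 1 - i) * (1 - w * p ^ i)) := by
  have key := pow_div_prod_one_sub_mul_eq_sum (s := range K) (a := (p ^ ·)) (k := k)
    (fun i _ => pow_ne_zero i hp0) (pow_injective_of_not_isOfFinOrder hp0 hp).injOn
    (fun i hi => by rw [mul_comm]; exact hw i (mem_range.mp hi)) (by rwa [card_range])
  simp only [mul_comm _ w] at key
  rw [qPoch, key]
  refine sum_congr rfl fun i hi => ?_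
  rw [prod_erase_range_one_sub_pow_div_pow hp0 (mem_range.mp hi), zpow_sub₀ hp0, zpow_neg,
    ← pow_mul, show (i : ℤ) * k = ((i * k : ℕ) : ℤ) by push_cast; rfl, zpow_natCast]
  simp only [div_eq_mul_inv, one_mul, mul_inv, inv_inv, ← inv_pow, inv_neg_one]
  ring

lemma qPoch_mul_zpow_neg {p : F} (hp : p ≠ 0) {z : F} (hz : z ≠ 0) (N : ℕ) :
    qPoch (z * p ^ (-(N : ℤ))) p (2 * N + 1) =
      (-z) ^ N * p ^ (-(((N : ℤ) ^ 2 + N) / 2)) * qPoch (p / z) p N * qPoch z p (N + 1) := by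
  rw [qPoch, show 2 * N + 1 = N + (N + 1) by ring, prod_range_add,
    ← prod_one_sub_mul_zpow_neg hp hz, ← prod_range_reflect]
  congr 1 <;> refine prod_congr rfl fun i hi => ?_
  · have hi : i < N := mem_range.mp hi
    rw [mul_assoc, ← zpow_natCast, ← zpow_add₀ hp, Nat.sub_sub,
      Nat.cast_sub (by omega : 1 + i ≤ N)]
    push_cast
    ring_nf
  · rw [mul_assoc, ← zpow_natCast, ← zpow_add₀ hp, ← zpow_natCast]
    push_cast
    ring_nf

def bilateralTerm (p z : F) (n : ℤ) : F := (-1) ^ n * p ^ ((n ^ 2 + n) / 2) / (1 - z * p ^ n)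

lemma bilateralTerm_natCast_sub {p : F} (hp : p ≠ 0) (z : F) (i N : ℕ) :
    bilateralTerm p z (i - N) = (-1) ^ N * p ^ ((N : ℤ) ^ 2 - ((N : ℤ) ^ 2 + N) / 2) *
      ((-1) ^ i * p ^ (((i : ℤ) ^ 2 + i) / 2 - i * N) / (1 - z * p ^ (-(N : ℤ)) * p ^ i)) := by
  have hexp : (((i : ℤ) - N) ^ 2 + (i - N)) / 2 =
      ((N : ℤ) ^ 2 - ((N : ℤ) ^ 2 + N) / 2) + (((i : ℤ) ^ 2 + i) / 2 - i * N) := by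
    have := two_mul_sq_add_ediv_two ((i : ℤ) - N)
    have := two_mul_sq_add_ediv_two (i : ℤ)
    have := two_mul_sq_add_ediv_two (N : ℤ)
    linarith
  have hsign : (-1 : F) ^ ((i : ℤ) - N) = (-1) ^ N * (-1) ^ i := by
    rw [zpow_sub₀ (by norm_num), zpow_natCast, zpow_natCast, div_eq_mul_inv, ← inv_pow,
      inv_neg_one, mul_comm]
  rw [mul_assoc z, ← zpow_natCast p i, ← zpow_add₀ hp, neg_add_eq_sub, bilateralTerm, hexp,
    zpow_add₀ hp, hsign]
  ring

theorem sum_range_bilateralTerm_div_qPoch {p : F} (hp0 : p ≠ 0) (hp : ¬IsOfFinOrder p) {z : F}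
    (hz0 : z ≠ 0) (hz : ∀ n : ℤ, z * p ^ n ≠ 1) (N : ℕ) :
    ∑ i ∈ range (2 * N + 1), bilateralTerm p z (i - N) / (qPoch p p i * qPoch p p (2 * N - i)) =
      (qPoch z p (N + 1) * qPoch (p / z) p N)⁻¹ := by
  -- expanding at `z p^(-N)` centres the indices `i ≤ 2N` of `pow_div_qPoch_eq_sum` at `n = i - N`
  set w := z * p ^ (-(N : ℤ))
  have hw : ∀ i < 2 * N + 1, w * p ^ i ≠ 1 := fun i _ => by
    rw [mul_assoc, ← zpow_natCast, ← zpow_add₀ hp0]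
    exact hz _
  have hpf := pow_div_qPoch_eq_sum hp0 hp hw (k := N) (by omega)
  rw [qPoch_mul_zpow_neg hp0 hz0] at hpf
  have hpow : p ^ ((N : ℤ) ^ 2 - ((N : ℤ) ^ 2 + N) / 2) * (p ^ (-(N : ℤ))) ^ N =
      p ^ (-(((N : ℤ) ^ 2 + N) / 2)) := by
    rw [← zpow_natCast, ← zpow_mul, ← zpow_add₀ hp0]
    ring_nf
  have hne : (-1) ^ N * z ^ N * p ^ (-(((N : ℤ) ^ 2 + N) / 2)) ≠ 0 :=
    mul_ne_zero (mul_ne_zero (pow_ne_zero N (by norm_num)) (pow_ne_zero N hz0))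
      (zpow_ne_zero _ hp0)
  calc _ = (-1) ^ N * p ^ ((N : ℤ) ^ 2 - ((N : ℤ) ^ 2 + N) / 2) *
        ∑ i ∈ range (2 * N + 1), (-1) ^ i * p ^ (((i : ℤ) ^ 2 + i) / 2 - i * N) /
          (qPoch p p i * qPoch p p (2 * N + 1 - 1 - i) * (1 - w * p ^ i)) := by
        rw [mul_sum]
        refine sum_congr rfl fun i _ => ?_
        rw [bilateralTerm_natCast_sub hp0, show 2 * N + 1 - 1 - i = 2 * N - i by omega]
        simp only [div_eq_mul_inv, mul_inv]
        ring
    _ = (-1) ^ N * z ^ N * (p ^ ((N : ℤ) ^ 2 - ((N : ℤ) ^ 2 + N) / 2) * (p ^ (-(N : ℤ))) ^ N) /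
          ((-1) ^ N * z ^ N * p ^ (-(((N : ℤ) ^ 2 + N) / 2)) *
            (qPoch z p (N + 1) * qPoch (p / z) p N)) := by
        rw [← hpf, neg_pow z]
        ring
    _ = _ := by rw [hpow, div_mul_cancel_left₀ hne]

end Field

lemma exists_norm_inv_le_of_tendsto {𝕜 : Type*} [NormedDivisionRing 𝕜] {u : ℕ → 𝕜} {L : 𝕜}
    (hu : Tendsto u atTop (𝓝 L)) (hL : L ≠ 0) : ∃ C, ∀ k, ‖(u k)⁻¹‖ ≤ C := by
  obtain ⟨C, hC⟩ := (hu.inv₀ hL).norm.bddAbove_range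
  exact ⟨C, fun k => hC ⟨k, rfl⟩⟩

section NormedField

variable {𝕜 : Type*} [NormedField 𝕜] {p : 𝕜}

lemma zpow_ne_one_of_norm_lt_one (hp0 : p ≠ 0) (hp : ‖p‖ < 1) {m : ℤ} (hm : m ≠ 0) :
    p ^ m ≠ 1 := by
  intro h
  have := congrArg norm h
  rw [norm_zpow, norm_one, ← zpow_zero ‖p‖] at this
  exact hm (zpow_right_injective₀ (norm_pos_iff.mpr hp0) hp.ne this)

lemma norm_zpow_sq_add_ediv_two_le (hp0 : p ≠ 0) (hp : ‖p‖ ≤ 1) (k : ℕ) :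
    ‖p ^ (((k : ℤ) ^ 2 + k) / 2)‖ ≤ ‖p‖ ^ k := by
  rw [norm_zpow, ← zpow_natCast]
  refine zpow_le_zpow_right_of_le_one₀ (norm_pos_iff.mpr hp0) hp ?_
  have := two_mul_sq_add_ediv_two (k : ℤ)
  nlinarith [sq_nonneg ((k : ℤ) - 1)]

lemma summable_norm_bilateralTerm (hp0 : p ≠ 0) (hp : ‖p‖ < 1) {z : 𝕜} (hz0 : z ≠ 0) :
    Summable fun n : ℤ => ‖bilateralTerm p z n‖ := by
  have hgeom := summable_geometric_of_lt_one (norm_nonneg p) hp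
  have hpk := tendsto_pow_atTop_nhds_zero_of_norm_lt_one hp
  obtain ⟨C₁, hC₁⟩ := exists_norm_inv_le_of_tendsto (u := fun k => 1 - z * p ^ k)
    (by simpa using (hpk.const_mul z).const_sub 1) one_ne_zero
  obtain ⟨C₂, hC₂⟩ := exists_norm_inv_le_of_tendsto (u := fun k => p ^ (k + 1) - z)
    (by simpa using (hpk.comp (tendsto_add_atTop_nat 1)).sub_const z) (neg_ne_zero.mpr hz0)
  refine Summable.of_nat_of_neg_add_one
    (.of_nonneg_of_le (fun _ => norm_nonneg _) (fun k => ?_) (hgeom.mul_left C₁))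
    (.of_nonneg_of_le (fun _ => norm_nonneg _) (fun k => ?_) (hgeom.mul_left C₂))
  · rw [bilateralTerm, norm_div, norm_mul, norm_zpow, norm_neg, norm_one, one_zpow, one_mul,
      div_eq_mul_inv, ← norm_inv, zpow_natCast, mul_comm C₁]
    exact mul_le_mul (norm_zpow_sq_add_ediv_two_le hp0 hp.le k) (hC₁ k) (norm_nonneg _)
      (by positivity)
  · have hexp : ((-((k : ℤ) + 1)) ^ 2 + -((k : ℤ) + 1)) / 2 = ((k : ℤ) ^ 2 + k) / 2 := by
      congr 1
      ring
    have hden : 1 - z * p ^ (-((k : ℤ) + 1)) = (p ^ (k + 1) - z) / p ^ (k + 1) := by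
      rw [zpow_neg, ← Nat.cast_succ, zpow_natCast]
      field_simp
    have hpk1 : ‖p ^ (k + 1)‖ ≤ 1 := by
      rw [norm_pow]
      exact pow_le_one₀ (norm_nonneg p) hp.le
    rw [bilateralTerm, hexp, hden, norm_div, norm_mul, norm_zpow, norm_neg, norm_one, one_zpow,
      one_mul, norm_div, div_div_eq_mul_div, mul_div_assoc, div_eq_mul_inv, ← norm_inv,
      mul_comm C₂]
    calc ‖p ^ (((k : ℤ) ^ 2 + k) / 2)‖ * (‖p ^ (k + 1)‖ * ‖(p ^ (k + 1) - z)⁻¹‖)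
        ≤ ‖p‖ ^ k * (1 * C₂) := by
          gcongr
          · exact norm_zpow_sq_add_ediv_two_le hp0 hp.le k
          · exact hC₂ k
      _ = ‖p‖ ^ k * C₂ := by ring

end NormedField

section Complex

variable {p z : ℂ}

lemma summable_norm_mul_pow (a : ℂ) (hp : ‖p‖ < 1) : Summable fun k : ℕ => ‖a * p ^ k‖ := by
  simpa [norm_mul, norm_pow] using (summable_geometric_of_lt_one (norm_nonneg p) hp).mul_left ‖a‖

lemma tendsto_qPoch (a : ℂ) (hp : ‖p‖ < 1) :
    Tendsto (fun N => qPoch a p N) atTop (𝓝 (qPochInf a p)) := by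
  have := (multipliable_one_add_of_summable (f := fun k => -(a * p ^ k))
    (by simpa using summable_norm_mul_pow a hp)).hasProd.tendsto_prod_nat
  simpa [qPoch, qPochInf, sub_eq_add_neg] using this

lemma qPochInf_ne_zero {a : ℂ} (hp : ‖p‖ < 1) (ha : ∀ k : ℕ, a * p ^ k ≠ 1) :
    qPochInf a p ≠ 0 := by
  have := tprod_one_add_ne_zero_of_summable (f := fun k => -(a * p ^ k))
    (fun k => by rw [← sub_eq_add_neg, sub_ne_zero]; exact (ha k).symm)
    (by simpa using summable_norm_mul_pow a hp)
  simpa [qPochInf, sub_eq_add_neg] using this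

lemma qPochInf_self_ne_zero (hp : ‖p‖ < 1) : qPochInf p p ≠ 0 :=
  qPochInf_ne_zero hp fun k h => by
    rw [← pow_succ'] at h
    exact (pow_lt_one₀ (norm_nonneg p) hp k.succ_ne_zero).ne (by rw [← norm_pow, h, norm_one])

noncomputable def truncBilateralTerm (p z : ℂ) (N : ℕ) (n : ℤ) : ℂ :=
  if n.natAbs ≤ N then bilateralTerm p z n / (qPoch p p (N + n).toNat * qPoch p p (N - n).toNat)
  else 0

lemma tsum_truncBilateralTerm (hp0 : p ≠ 0) (hp : ‖p‖ < 1) (hz0 : z ≠ 0)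
    (hz : ∀ n : ℤ, z * p ^ n ≠ 1) (N : ℕ) :
    ∑' n, truncBilateralTerm p z N n = (qPoch z p (N + 1) * qPoch (p / z) p N)⁻¹ := by
  rw [tsum_eq_sum (s := Icc (-(N : ℤ)) N) fun n hn => by
      rw [mem_Icc] at hn
      rw [truncBilateralTerm, if_neg (by omega)],
    ← sum_range_bilateralTerm_div_qPoch hp0 (fun h => hp.ne h.norm_eq_one) hz0 hz N]
  refine sum_nbij' (fun n => (n + N).toNat) (fun i => i - N) ?_ ?_ ?_ ?_ fun n hn => ?_
  any_goals (intro m hm; simp only [mem_Icc, mem_range] at hm ⊢; omega)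
  rw [mem_Icc] at hn
  rw [truncBilateralTerm, if_pos (by omega), show ((n + N).toNat : ℤ) - N = n by omega,
    show ((N : ℤ) + n).toNat = (n + N).toNat by omega,
    show 2 * N - (n + N).toNat = ((N : ℤ) - n).toNat by omega]

lemma tendsto_truncBilateralTerm (hp : ‖p‖ < 1) (n : ℤ) :
    Tendsto (fun N => truncBilateralTerm p z N n) atTop
      (𝓝 (bilateralTerm p z n / (qPochInf p p * qPochInf p p))) := by
  have hshift : ∀ m : ℤ, Tendsto (fun N : ℕ => ((N : ℤ) + m).toNat) atTop atTop := fun m =>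
    tendsto_atTop_atTop.mpr fun b => ⟨b + m.natAbs, fun N hN => by omega⟩
  have hlim := (tendsto_const_nhds (x := bilateralTerm p z n)).div
    (((tendsto_qPoch p hp).comp (hshift n)).mul ((tendsto_qPoch p hp).comp (hshift (-n))))
    (mul_ne_zero (qPochInf_self_ne_zero hp) (qPochInf_self_ne_zero hp))
  refine hlim.congr' ?_
  filter_upwards [eventually_ge_atTop n.natAbs] with N hN
  simp only [truncBilateralTerm, if_pos hN, Pi.div_apply, Function.comp_apply, sub_eq_add_neg]

lemma exists_norm_truncBilateralTerm_le (hp : ‖p‖ < 1) :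
    ∃ C, ∀ N n, ‖truncBilateralTerm p z N n‖ ≤ C * ‖bilateralTerm p z n‖ := by
  obtain ⟨C, hC⟩ := exists_norm_inv_le_of_tendsto (tendsto_qPoch p hp) (qPochInf_self_ne_zero hp)
  have hC0 : 0 ≤ C := (norm_nonneg _).trans (hC 0)
  refine ⟨C * C, fun N n => ?_⟩
  rw [truncBilateralTerm]
  split_ifs
  · rw [div_eq_mul_inv, mul_inv, norm_mul, norm_mul, mul_comm]
    gcongr <;> exact hC _
  · rw [norm_zero]
    positivity

theorem tsum_bilateralTerm (hp0 : p ≠ 0) (hp : ‖p‖ < 1) (hz0 : z ≠ 0)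
    (hz : ∀ n : ℤ, z * p ^ n ≠ 1) :
    ∑' n, bilateralTerm p z n = qPochInf p p ^ 2 / (qPochInf z p * qPochInf (p / z) p) := by
  have hzp : qPochInf z p ≠ 0 := qPochInf_ne_zero hp fun k => by exact_mod_cast hz k
  have hpz : qPochInf (p / z) p ≠ 0 := qPochInf_ne_zero hp fun k h => hz (-(k + 1)) <| by
    rw [div_mul_eq_mul_div, ← pow_succ', div_eq_one_iff_eq hz0] at h
    rw [← h, ← zpow_natCast, ← zpow_add₀ hp0]
    simp
  obtain ⟨C, hC⟩ := exists_norm_truncBilateralTerm_le (z := z) hp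
  have hlim := tendsto_tsum_of_dominated_convergence
    ((summable_norm_bilateralTerm hp0 hp hz0).mul_left C) (tendsto_truncBilateralTerm hp)
    (.of_forall hC)
  simp only [tsum_truncBilateralTerm hp0 hp hz0 hz, tsum_div_const] at hlim
  have hlim' := (((tendsto_qPoch z hp).comp (tendsto_add_atTop_nat 1)).mul
    (tendsto_qPoch (p / z) hp)).inv₀ (mul_ne_zero hzp hpz)
  have hpp := qPochInf_self_ne_zero hp
  have key := tendsto_nhds_unique hlim hlim'
  rw [div_eq_iff (mul_ne_zero hpp hpp)] at key
  rw [key]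
  ring

end Complex

theorem bilateral_sum_H (q : ℂ) (hq0 : q ≠ 0) (hq : ‖q‖ < 1) :
    (∑' m : ℤ, (-1 : ℂ) ^ m * q ^ ((5 * m ^ 2 + 5 * m) / 2) / (1 - q ^ (5 * m + 2)))
      = qPochInf (q ^ 5) (q ^ 5) ^ 2 * RRH q := by
  have hp : ‖q ^ 5‖ < 1 := by
    rw [norm_pow]
    exact pow_lt_one₀ (norm_nonneg q) hq (by norm_num)
  have hzp : ∀ m : ℤ, q ^ 2 * (q ^ 5) ^ m = q ^ (5 * m + 2) := fun m => by
    rw [← zpow_natCast, ← zpow_natCast, ← zpow_mul, ← zpow_add₀ hq0]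
    push_cast
    ring_nf
  have h := tsum_bilateralTerm (pow_ne_zero 5 hq0) hp (pow_ne_zero 2 hq0)
    fun m => by rw [hzp]; exact zpow_ne_one_of_norm_lt_one hq0 hq (by omega)
  rw [show q ^ 5 / q ^ 2 = q ^ 3 by rw [div_eq_iff (pow_ne_zero 2 hq0)]; ring] at h
  rw [RRH, mul_one_div, ← h]
  refine tsum_congr fun m => ?_
  have := two_mul_sq_add_ediv_two m
  rw [bilateralTerm, hzp, ← zpow_natCast, ← zpow_mul]
  congr 3
  push_cast
  omega
end

section
/- The two series identities are equivalent: (B): (1/q²) Σ_{j≥0} [ q^{5j+2}/(1−q^{5j+1}) − q^{5j+5}/(1−q^{5j+4}) − 3q^{5j+3}/(1−q^{5j+2}) + 3q^{5j+4}/(1−q^{5j+3}) ] = (q^5;q^5)_∞² H(q)³/G(q)², and (C): Σ_{m≥0} q^m(1−q^{m+1})³/(1−q^{5m+5}) = (q^5;q^5)_∞² H(q)³/G(q)². More precisely, the left sides of (B) and (C) are equal as formal power series. -/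
/-!
Writing `q ^ (n + 1) / (1 - q ^ n) = q * ∑_{k ≥ 0} q ^ (n * (k + 1))`, each of the four Lambert
series on the left is `q` times the double series `∑_{j,k} q ^ ((5 j + r) (k + 1))` for
`r = 1, 4, 2, 3`. Summing these absolutely convergent double series over `j` first instead gives
`∑_m q ^ (r (m + 1)) / (1 - q ^ (5 (m + 1)))`, and with `x = q ^ (m + 1)` the combination
`x - x ^ 4 - 3 x ^ 2 + 3 x ^ 3 = x (1 - x) ^ 3` is the numerator on the right.
-/

section LambertArithProg

variable {q : ℂ}

lemma norm_pow_lt_one_of_ne_zero (hq : ‖q‖ < 1) {n : ℕ} (hn : n ≠ 0) : ‖q ^ n‖ < 1 := by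
  rw [norm_pow]
  exact pow_lt_one₀ (norm_nonneg q) hq hn

lemma hasSum_mul_geometric {x : ℂ} (hx : ‖x‖ < 1) (a : ℂ) :
    HasSum (fun k : ℕ => a * x ^ k) (a / (1 - x)) :=
  (hasSum_geometric_of_norm_lt_one hx).mul_left a

lemma hasSum_pow_mul_succ (hq : ‖q‖ < 1) {n : ℕ} (hn : n ≠ 0) :
    HasSum (fun k : ℕ => q ^ (n * (k + 1))) (q ^ n / (1 - q ^ n)) := by
  convert hasSum_mul_geometric (norm_pow_lt_one_of_ne_zero hq hn) (q ^ n) using 2 with k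
  ring

variable {d r : ℕ}

lemma summable_pow_mul_arithProg (hq : ‖q‖ < 1) (hd : d ≠ 0) (hr : r ≠ 0) :
    Summable (fun p : ℕ × ℕ => q ^ ((d * p.1 + r) * (p.2 + 1))) := by
  have hq0 : 0 ≤ ‖q‖ := norm_nonneg q
  have hgeom : Summable (fun n : ℕ => ‖q‖ ^ n) := summable_geometric_of_lt_one hq0 hq
  refine Summable.of_norm_bounded (hgeom.mul_of_nonneg hgeom (pow_nonneg hq0) (pow_nonneg hq0))
    fun ⟨j, k⟩ => ?_
  have hexp : j + k ≤ (d * j + r) * (k + 1) := by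
    have : j + 1 ≤ d * j + r :=
      Nat.add_le_add (Nat.le_mul_of_pos_left j (Nat.pos_of_ne_zero hd))
        (Nat.one_le_iff_ne_zero.2 hr)
    nlinarith
  rw [norm_pow, ← pow_add]
  exact pow_le_pow_of_le_one hq0 hq.le hexp

theorem hasSum_lambert_arithProg_rows (hq : ‖q‖ < 1) (hd : d ≠ 0) (hr : r ≠ 0) :
    HasSum (fun j : ℕ => q ^ (d * j + r) / (1 - q ^ (d * j + r)))
      (∑' p : ℕ × ℕ, q ^ ((d * p.1 + r) * (p.2 + 1))) :=
  (summable_pow_mul_arithProg hq hd hr).hasSum.prod_fiberwise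
    fun j => hasSum_pow_mul_succ hq (by omega)

theorem hasSum_lambert_arithProg_cols (hq : ‖q‖ < 1) (hd : d ≠ 0) (hr : r ≠ 0) :
    HasSum (fun m : ℕ => q ^ (r * (m + 1)) / (1 - q ^ (d * (m + 1))))
      (∑' p : ℕ × ℕ, q ^ ((d * p.1 + r) * (p.2 + 1))) := by
  rw [← (Equiv.prodComm ℕ ℕ).tsum_eq]
  refine (summable_pow_mul_arithProg hq hd hr).prod_symm.hasSum.prod_fiberwise fun m => ?_
  convert hasSum_mul_geometric (norm_pow_lt_one_of_ne_zero hq (n := d * (m + 1)) (by positivity))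
    (q ^ (r * (m + 1))) using 2 with j
  simp only [Prod.swap]
  ring

end LambertArithProg

/-- The Lambert-series reduction (B) ⇔ (C): the left sides of the two
identities agree as (convergent) series for `0 < |q| < 1`. -/
theorem lambert_B_eq_C (q : ℂ) (hq0 : q ≠ 0) (hq : ‖q‖ < 1) :
    (1 / q ^ 2) * ∑' j : ℕ,
        (q ^ (5 * j + 2) / (1 - q ^ (5 * j + 1)) - q ^ (5 * j + 5) / (1 - q ^ (5 * j + 4))
          - 3 * q ^ (5 * j + 3) / (1 - q ^ (5 * j + 2))
          + 3 * q ^ (5 * j + 4) / (1 - q ^ (5 * j + 3)))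
      = ∑' m : ℕ, q ^ m * (1 - q ^ (m + 1)) ^ 3 / (1 - q ^ (5 * m + 5)) := by
  have rows (r : ℕ) (hr : r ≠ 0) := hasSum_lambert_arithProg_rows hq (d := 5) (by norm_num) hr
  have cols (r : ℕ) (hr : r ≠ 0) := hasSum_lambert_arithProg_cols hq (d := 5) (by norm_num) hr
  have hB := ((((rows 1 one_ne_zero).sub (rows 4 (by norm_num))).sub
    ((rows 2 two_ne_zero).mul_left 3)).add ((rows 3 three_ne_zero).mul_left 3)).mul_left q
  have hC := ((((cols 1 one_ne_zero).sub (cols 4 (by norm_num))).sub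
    ((cols 2 two_ne_zero).mul_left 3)).add ((cols 3 three_ne_zero).mul_left 3)).mul_left q⁻¹
  rw [(hB.congr_fun fun j => ?B).tsum_eq, (hC.congr_fun fun m => ?C).tsum_eq]
  case B => ring
  case C =>
    rw [show 5 * (m + 1) = 5 * m + 5 by ring]
    field_simp
    ring
  field_simp
end

section
/- The mod-7 analogue of the Lambert-series reduction: as formal power series, (3/q²) Σ_{j≥0} [ q^{7j+5}/(1−q^{7j+4}) − q^{7j+4}/(1−q^{7j+3}) + 2q^{7j+2}/(1−q^{7j+1}) − 2q^{7j+7}/(1−q^{7j+6}) + 3q^{7j+6}/(1−q^{7j+5}) − 3q^{7j+3}/(1−q^{7j+2}) ] = 3 Σ_{m≥0} q^m (1−q^{m+1})³ (2q^{2m+2} + 3q^{m+1} + 2) / (1−q^{7m+7}). -/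
/-!
Expanding `1 / (1 - q ^ (N j + A))` geometrically turns `∑ j, q ^ (N j) / (1 - q ^ (N j + A))`
into the absolutely convergent double series `∑ j m, q ^ (N j + (N j + A) m)`; summing it
in the other order gives `∑ m, q ^ (A m) / (1 - q ^ (N m + N))`. With `N = 7`, both sides of the
theorem are the combination of these six series (`A = 1, …, 6`) with coefficients
`(2, -3, -1, 1, 3, -2) q ^ (A - 1)`: on the right this is the expansion of
`q ^ m (1 - q ^ (m + 1)) ^ 3 (2 q ^ (2m + 2) + 3 q ^ (m + 1) + 2)`.
-/

namespace Lambert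

variable {q : ℂ} {N A : ℕ}

lemma norm_pow_lt_one (hq : ‖q‖ < 1) {n : ℕ} (hn : n ≠ 0) : ‖q ^ n‖ < 1 := by
  rw [norm_pow]
  exact pow_lt_one₀ (norm_nonneg q) hq hn

lemma summable_double (hq : ‖q‖ < 1) (hN : N ≠ 0) (hA : A ≠ 0) :
    Summable fun p : ℕ × ℕ => q ^ (N * p.1) * (q ^ (N * p.1 + A)) ^ p.2 := by
  have hgeom := summable_geometric_of_lt_one (norm_nonneg q) hq
  refine .of_norm_bounded (hgeom.mul_of_nonneg hgeom (fun _ => by positivity)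
    (fun _ => by positivity)) ?_
  rintro ⟨j, m⟩
  rw [← pow_add, norm_mul, norm_pow, norm_pow, norm_pow, ← pow_mul, ← pow_add]
  exact pow_le_pow_of_le_one (norm_nonneg q) hq.le
    (add_le_add (Nat.le_mul_of_pos_left j (by omega)) (Nat.le_mul_of_pos_left m (by omega)))

lemma div_one_sub_eq_tsum_left (hq : ‖q‖ < 1) (hA : A ≠ 0) (j : ℕ) :
    q ^ (N * j) / (1 - q ^ (N * j + A)) = ∑' m : ℕ, q ^ (N * j) * (q ^ (N * j + A)) ^ m := by
  rw [tsum_mul_left, tsum_geometric_of_norm_lt_one (norm_pow_lt_one hq (by omega)), div_eq_mul_inv]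

lemma div_one_sub_eq_tsum_right (hq : ‖q‖ < 1) (hN : N ≠ 0) (m : ℕ) :
    q ^ (A * m) / (1 - q ^ (N * m + N)) = ∑' j : ℕ, q ^ (N * j) * (q ^ (N * j + A)) ^ m := by
  have hexp (j : ℕ) :
      q ^ (N * j) * (q ^ (N * j + A)) ^ m = q ^ (A * m) * (q ^ (N * m + N)) ^ j := by
    rw [← pow_mul, ← pow_add, ← pow_mul, ← pow_add]
    ring_nf
  rw [tsum_congr hexp, tsum_mul_left,
    tsum_geometric_of_norm_lt_one (norm_pow_lt_one hq (by omega)), div_eq_mul_inv]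

lemma summable_left (hq : ‖q‖ < 1) (hN : N ≠ 0) (hA : A ≠ 0) :
    Summable fun j : ℕ => q ^ (N * j) / (1 - q ^ (N * j + A)) := by
  simpa only [div_one_sub_eq_tsum_left hq hA] using (summable_double hq hN hA).prod

lemma summable_right (hq : ‖q‖ < 1) (hN : N ≠ 0) (hA : A ≠ 0) :
    Summable fun m : ℕ => q ^ (A * m) / (1 - q ^ (N * m + N)) := by
  simpa only [div_one_sub_eq_tsum_right hq hN, Prod.fst_swap, Prod.snd_swap] using
    (summable_double hq hN hA).prod_symm.prod

theorem tsum_div_one_sub_comm (hq : ‖q‖ < 1) (hN : N ≠ 0) (hA : A ≠ 0) :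
    ∑' j : ℕ, q ^ (N * j) / (1 - q ^ (N * j + A))
      = ∑' m : ℕ, q ^ (A * m) / (1 - q ^ (N * m + N)) := by
  simp only [div_one_sub_eq_tsum_left hq hA, div_one_sub_eq_tsum_right hq hN]
  exact (Summable.tsum_comm (f := fun j m => q ^ (N * j) * (q ^ (N * j + A)) ^ m)
    (summable_double hq hN hA)).symm

theorem tsum_finsetSum_div_one_sub_comm {ι : Type*} (s : Finset ι) (a : ι → ℂ) {A : ι → ℕ}
    (hq : ‖q‖ < 1) (hN : N ≠ 0) (hA : ∀ i ∈ s, A i ≠ 0) :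
    ∑' j : ℕ, ∑ i ∈ s, a i * (q ^ (N * j) / (1 - q ^ (N * j + A i)))
      = ∑' m : ℕ, ∑ i ∈ s, a i * (q ^ (A i * m) / (1 - q ^ (N * m + N))) := by
  rw [Summable.tsum_finsetSum fun i hi => (summable_left hq hN (hA i hi)).mul_left (a i),
    Summable.tsum_finsetSum fun i hi => (summable_right hq hN (hA i hi)).mul_left (a i)]
  refine Finset.sum_congr rfl fun i hi => ?_
  rw [tsum_mul_left, tsum_mul_left, tsum_div_one_sub_comm hq hN (hA i hi)]

end Lambert

/-- The mod-7 Lambert-series reduction (E) ⇔ (F). -/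
theorem lambert_E_eq_F (q : ℂ) (hq0 : q ≠ 0) (hq : ‖q‖ < 1) :
    (3 / q ^ 2) * ∑' j : ℕ,
        (q ^ (7 * j + 5) / (1 - q ^ (7 * j + 4)) - q ^ (7 * j + 4) / (1 - q ^ (7 * j + 3))
          + 2 * q ^ (7 * j + 2) / (1 - q ^ (7 * j + 1))
          - 2 * q ^ (7 * j + 7) / (1 - q ^ (7 * j + 6))
          + 3 * q ^ (7 * j + 6) / (1 - q ^ (7 * j + 5))
          - 3 * q ^ (7 * j + 3) / (1 - q ^ (7 * j + 2)))
      = 3 * ∑' m : ℕ,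
          q ^ m * (1 - q ^ (m + 1)) ^ 3 * (2 * q ^ (2 * m + 2) + 3 * q ^ (m + 1) + 2)
            / (1 - q ^ (7 * m + 7)) := by
  set c : Fin 6 → ℂ := ![2, -3, -1, 1, 3, -2]
  have hE (j : ℕ) :
      q ^ (7 * j + 5) / (1 - q ^ (7 * j + 4)) - q ^ (7 * j + 4) / (1 - q ^ (7 * j + 3))
          + 2 * q ^ (7 * j + 2) / (1 - q ^ (7 * j + 1))
          - 2 * q ^ (7 * j + 7) / (1 - q ^ (7 * j + 6))
          + 3 * q ^ (7 * j + 6) / (1 - q ^ (7 * j + 5))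
          - 3 * q ^ (7 * j + 3) / (1 - q ^ (7 * j + 2))
        = q ^ 2 * ∑ i, c i * q ^ (i : ℕ) * (q ^ (7 * j) / (1 - q ^ (7 * j + (i + 1)))) := by
    simp only [c, Fin.sum_univ_six, Matrix.cons_val, Fin.isValue, Fin.coe_ofNat_eq_mod,
      Nat.reduceMod, pow_add]
    ring
  have hF (m : ℕ) :
      q ^ m * (1 - q ^ (m + 1)) ^ 3 * (2 * q ^ (2 * m + 2) + 3 * q ^ (m + 1) + 2)
          / (1 - q ^ (7 * m + 7))
        = ∑ i, c i * q ^ (i : ℕ) * (q ^ ((i + 1) * m) / (1 - q ^ (7 * m + 7))) := by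
    simp only [c, Fin.sum_univ_six, Matrix.cons_val, Fin.isValue, Fin.coe_ofNat_eq_mod,
      Nat.reduceMod, Nat.reduceAdd]
    ring
  rw [tsum_congr hE, tsum_congr hF, tsum_mul_left,
    Lambert.tsum_finsetSum_div_one_sub_comm _ _ hq (by norm_num) (fun i _ => i.val.succ_ne_zero)]
  field_simp
end
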